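/- arXiv:1701.07324 — 3 statements merged into one kernel-verified Lean document; each statement's English description precedes it below -/
import Mathlib

section
/- Let m, n, m', n' ≥ 2 be integers and let D and D' be division rings such that |D| ≤ |D'| and D is infinite. Then there exists a graph homomorphism φ: D^{m×n} → D'^{m'×n'} whose image φ(D^{m×n}) is an adjacent set (i.e., φ is a colouring). -/
open Matrix

/-- Rank of a matrix over a division ring: dimension of the left row space. -/
noncomputable def mrank {D : Type} [DivisionRing D] {m n : ℕ} (A : Matrix (Fin m) (Fin n) D) : ℕ :=
  Module.finrank D (Submodule.span D (Set.range fun i : Fin m => fun j : Fin n => A i j))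

/-!
Since `D` is infinite, `|D^{m×n}| ≤ |D| ≤ |D'|`, so there is an injection `f : D^{m×n} → D'`.
The map `X ↦ f(X) E₁₁` sends distinct matrices to matrices whose difference is a nonzero
multiple of the matrix unit `E₁₁`, hence of rank one; so its image is an adjacent set, and since
adjacent matrices are distinct, it is a graph homomorphism.
-/

open Cardinal

universe u

theorem Cardinal.mk_fun_le_of_infinite (ι α : Type u) [Finite ι] [Infinite α] :
    #(ι → α) ≤ #α := by
  cases nonempty_fintype ι
  rw [← power_def, mk_fintype ι]
  exact power_nat_le (aleph0_le_mk α)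

theorem Cardinal.mk_matrix_le_of_infinite (m n α : Type u) [Finite m] [Finite n] [Infinite α] :
    #(Matrix m n α) ≤ #α :=
  (Equiv.curry m n α).symm.cardinal_eq.trans_le (mk_fun_le_of_infinite (m × n) α)

section mrank

variable {D : Type} [DivisionRing D] {m n : ℕ}

theorem mrank_zero : mrank (0 : Matrix (Fin m) (Fin n) D) = 0 := by
  have hrows : Set.range (fun i : Fin m => fun j : Fin n => (0 : Matrix (Fin m) (Fin n) D) i j)
      ⊆ {0} := by
    rintro _ ⟨i, rfl⟩
    rfl
  rw [mrank, Submodule.span_eq_bot.mpr hrows, finrank_bot]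

theorem mrank_single (i : Fin m) (j : Fin n) {c : D} (hc : c ≠ 0) :
    mrank (single i j c) = 1 := by
  have hrow : ∀ i', (single i j c i' : Fin n → D) = if i' = i then Pi.single j c else 0 := by
    intro i'
    rw [single_eq_of_single_single]
    exact Pi.single_apply i (Pi.single j c : Fin n → D) i'
  have hspan : Submodule.span D (Set.range fun i' j' => single i j c i' j')
      = Submodule.span D {Pi.single j c} := by
    refine le_antisymm (Submodule.span_le.mpr ?_) (Submodule.span_le.mpr ?_)
    · rintro _ ⟨i', rfl⟩
      change single i j c i' ∈ _
      rw [hrow]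
      split_ifs
      exacts [Submodule.subset_span rfl, Submodule.zero_mem _]
    · rintro _ rfl
      exact Submodule.subset_span ⟨i, (hrow i).trans (if_pos rfl)⟩
  rw [mrank, hspan, finrank_span_singleton (by simpa using hc)]

theorem mrank_single_sub_single (i : Fin m) (j : Fin n) {a b : D} (hab : a ≠ b) :
    mrank (single i j a - single i j b) = 1 := by
  have hsub : single i j a - single i j b = single i j (a - b) :=
    (map_sub (singleAddMonoidHom i j) a b).symm
  rw [hsub]
  exact mrank_single i j (sub_ne_zero.mpr hab)

end mrank

theorem exists_colouring_of_infinite_general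
    {D D' : Type} [DivisionRing D] [DivisionRing D'] {m n m' n' : ℕ}
    (hm' : 2 ≤ m') (hn' : 2 ≤ n')
    (hcard : Cardinal.mk D ≤ Cardinal.mk D') (hinf : Infinite D) :
    ∃ φ : Matrix (Fin m) (Fin n) D → Matrix (Fin m') (Fin n') D',
      (∀ X Y, mrank (X - Y) = 1 → mrank (φ X - φ Y) = 1) ∧
      (∀ A ∈ Set.range φ, ∀ B ∈ Set.range φ, A ≠ B → mrank (A - B) = 1) := by
  obtain ⟨f⟩ : Nonempty (Matrix (Fin m) (Fin n) D ↪ D') :=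
    (mk_matrix_le_of_infinite (Fin m) (Fin n) D).trans hcard
  let φ X : Matrix (Fin m') (Fin n') D' := single ⟨0, by omega⟩ ⟨0, by omega⟩ (f X)
  have hφ : ∀ X Y, X ≠ Y → mrank (φ X - φ Y) = 1 := fun X Y hXY =>
    mrank_single_sub_single _ _ (f.injective.ne hXY)
  refine ⟨φ, fun X Y hXY => hφ X Y ?_, ?_⟩
  · rintro rfl
    rw [sub_self, mrank_zero] at hXY
    exact zero_ne_one hXY
  · rintro _ ⟨X, rfl⟩ _ ⟨Y, rfl⟩ hAB
    exact hφ X Y (ne_of_apply_ne φ hAB)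

/-- Example 2.4: if `|D| ≤ |D'|` and `D` is infinite, there is a colouring from `D^{m×n}` to
`D'^{m'×n'}`, i.e. a graph homomorphism whose image is an adjacent set. -/
theorem exists_colouring_of_infinite
    {D D' : Type} [DivisionRing D] [DivisionRing D'] {m n m' n' : ℕ}
    (hm : 2 ≤ m) (hn : 2 ≤ n) (hm' : 2 ≤ m') (hn' : 2 ≤ n')
    (hcard : Cardinal.mk D ≤ Cardinal.mk D') (hinf : Infinite D) :
    ∃ φ : Matrix (Fin m) (Fin n) D → Matrix (Fin m') (Fin n') D',
      (∀ X Y, mrank (X - Y) = 1 → mrank (φ X - φ Y) = 1) ∧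
      (∀ A ∈ Set.range φ, ∀ B ∈ Set.range φ, A ≠ B → mrank (A - B) = 1) :=
  exists_colouring_of_infinite_general hm' hn' hcard hinf
end

section
/- Let D and D' be division rings, let m, n, m', n' ≥ 2 be integers, and let k be an integer with 1 ≤ k ≤ min{m, n}. Suppose φ: D^{m×n} → D'^{m'×n'} satisfies rank(φ(X) − φ(Y)) = k whenever rank(X − Y) = k, and suppose there is a fixed matrix L ∈ D'^{n'×m'} such that I_{n'} + L·φ(X) is invertible for every X ∈ D^{m×n}. Define θ(X) = φ(X)·(I_{n'} + L·φ(X))^{-1} for X ∈ D^{m×n}. Then rank(θ(X) − θ(Y)) = k whenever rank(X − Y) = k. -/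
/-!
With `θ(A) = A (1 + L A)⁻¹`, the difference `θ(A) - θ(B)` is `A - B` multiplied on the left by
`1 - θ(A) L` and on the right by `(1 + L B)⁻¹`, while conversely `A - B` is `θ(A) - θ(B)`
multiplied by `1 + A L` and `1 + L B`. Since multiplying a matrix by anything on either side cannot
raise its rank, `θ(A) - θ(B)` and `A - B` have the same rank.
-/

open Matrix

section mrank

variable {D : Type} [DivisionRing D] {l m n p : ℕ}

theorem mrank_eq_finrank_range_vecMulLinear (A : Matrix (Fin m) (Fin n) D) :
    mrank A = Module.finrank D (LinearMap.range A.vecMulLinear) := by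
  rw [range_vecMulLinear]; rfl

theorem vecMulLinear_mul (A : Matrix (Fin l) (Fin m) D) (B : Matrix (Fin m) (Fin n) D) :
    (A * B).vecMulLinear = B.vecMulLinear ∘ₗ A.vecMulLinear :=
  LinearMap.ext fun v => (vecMul_vecMul v A B).symm

theorem mrank_mul_le_left (A : Matrix (Fin l) (Fin m) D) (B : Matrix (Fin m) (Fin n) D) :
    mrank (A * B) ≤ mrank A := by
  rw [mrank_eq_finrank_range_vecMulLinear, mrank_eq_finrank_range_vecMulLinear, vecMulLinear_mul,
    LinearMap.range_comp]
  exact Submodule.finrank_map_le _ _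

theorem mrank_mul_le_right (A : Matrix (Fin l) (Fin m) D) (B : Matrix (Fin m) (Fin n) D) :
    mrank (A * B) ≤ mrank B := by
  rw [mrank_eq_finrank_range_vecMulLinear, mrank_eq_finrank_range_vecMulLinear, vecMulLinear_mul]
  exact Submodule.finrank_mono (LinearMap.range_comp_le_range _ _)

theorem mrank_mul_mul_le (P : Matrix (Fin l) (Fin m) D) (M : Matrix (Fin m) (Fin n) D)
    (Q : Matrix (Fin n) (Fin p) D) : mrank (P * M * Q) ≤ mrank M :=
  (mrank_mul_le_left _ Q).trans (mrank_mul_le_right P M)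

end mrank

section twist

variable {R : Type*} [Ring R] {p q : Type*} [Fintype p] [Fintype q] [DecidableEq p] [DecidableEq q]

noncomputable def twist (L : Matrix q p R) (A : Matrix p q R) : Matrix p q R :=
  A * Ring.inverse (1 + L * A)

variable {L : Matrix q p R} {A B : Matrix p q R}

theorem twist_sub_twist (hA : IsUnit (1 + L * A)) (hB : IsUnit (1 + L * B)) :
    twist L A - twist L B = (1 - twist L A * L) * (A - B) * Ring.inverse (1 + L * B) := by
  set u := Ring.inverse (1 + L * A)
  set w := Ring.inverse (1 + L * B)
  have hu : u * (1 + L * A) = 1 := Ring.inverse_mul_cancel _ hA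
  have hw : (1 + L * B) * w = 1 := Ring.mul_inverse_cancel _ hB
  rw [← sub_eq_zero]
  calc A * u - B * w - (1 - A * u * L) * (A - B) * w
      = A * u * (1 - (1 + L * B) * w) - A * (1 - u * (1 + L * A)) * w := by
        simp only [Matrix.mul_add, Matrix.add_mul, Matrix.mul_sub, Matrix.sub_mul, Matrix.mul_one,
          Matrix.one_mul, Matrix.mul_assoc]
        abel
    _ = 0 := by rw [hu, hw]; simp

theorem sub_eq_mul_twist_sub_twist_mul (hA : IsUnit (1 + L * A)) (hB : IsUnit (1 + L * B)) :
    A - B = (1 + A * L) * (twist L A - twist L B) * (1 + L * B) := by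
  set u := Ring.inverse (1 + L * A)
  set w := Ring.inverse (1 + L * B)
  have hu : (1 + L * A) * u = 1 := Ring.mul_inverse_cancel _ hA
  have hw : w * (1 + L * B) = 1 := Ring.inverse_mul_cancel _ hB
  rw [← sub_eq_zero]
  calc A - B - (1 + A * L) * (A * u - B * w) * (1 + L * B)
      = (1 + A * L) * B * (w * (1 + L * B) - 1) - A * ((1 + L * A) * u - 1) * (1 + L * B) := by
        simp only [Matrix.mul_add, Matrix.add_mul, Matrix.mul_sub, Matrix.sub_mul, Matrix.mul_one,
          Matrix.one_mul, Matrix.mul_assoc]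
        abel
    _ = 0 := by rw [hu, hw]; simp

end twist

theorem mrank_twist_sub_twist {D : Type} [DivisionRing D] {m n : ℕ}
    {L : Matrix (Fin n) (Fin m) D} {A B : Matrix (Fin m) (Fin n) D}
    (hA : IsUnit (1 + L * A)) (hB : IsUnit (1 + L * B)) :
    mrank (twist L A - twist L B) = mrank (A - B) := by
  apply le_antisymm
  · rw [twist_sub_twist hA hB]
    exact mrank_mul_mul_le _ _ _
  · conv_lhs => rw [sub_eq_mul_twist_sub_twist_mul hA hB]
    exact mrank_mul_mul_le _ _ _

theorem distance_k_preserving_of_right_inverse_twist_general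
    {D D' : Type} [DivisionRing D] [DivisionRing D'] {m n m' n' k : ℕ}
    (φ : Matrix (Fin m) (Fin n) D → Matrix (Fin m') (Fin n') D')
    (hφ : ∀ X Y, mrank (X - Y) = k → mrank (φ X - φ Y) = k)
    (L : Matrix (Fin n') (Fin m') D')
    (hL : ∀ X, IsUnit (1 + L * φ X)) :
    ∀ X Y, mrank (X - Y) = k →
      mrank (φ X * Ring.inverse (1 + L * φ X) - φ Y * Ring.inverse (1 + L * φ Y)) = k :=
  fun X Y hXY => (mrank_twist_sub_twist (hL X) (hL Y)).trans (hφ X Y hXY)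

/-- Example 2.6: if `φ` preserves distance `k` and `I + L·φ(X)` is always invertible, then
`θ(X) = φ(X)·(I + L·φ(X))⁻¹` also preserves distance `k`. -/
theorem distance_k_preserving_of_right_inverse_twist
    {D D' : Type} [DivisionRing D] [DivisionRing D'] {m n m' n' k : ℕ}
    (hm : 2 ≤ m) (hn : 2 ≤ n) (hm' : 2 ≤ m') (hn' : 2 ≤ n')
    (hk1 : 1 ≤ k) (hk2 : k ≤ min m n)
    (φ : Matrix (Fin m) (Fin n) D → Matrix (Fin m') (Fin n') D')
    (hφ : ∀ X Y, mrank (X - Y) = k → mrank (φ X - φ Y) = k)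
    (L : Matrix (Fin n') (Fin m') D')
    (hL : ∀ X, IsUnit (1 + L * φ X)) :
    ∀ X Y, mrank (X - Y) = k →
      mrank (φ X * Ring.inverse (1 + L * φ X) - φ Y * Ring.inverse (1 + L * φ Y)) = k :=
  distance_k_preserving_of_right_inverse_twist_general φ hφ L hL
end

section
/- Let D and D' be division rings, m, n, m', n' ≥ 2, and let φ: D^{m×n} → D'^{m'×n'} be a non-degenerate graph homomorphism with φ(0) = 0. Suppose M is a maximal set of type one (resp. type two) containing 0 in D^{m×n} and φ(M) ⊆ M' for some maximal set M' in D'^{m'×n'}. Then for any A ∈ M there exists a maximal set R of type one (resp. type two) in D^{m×n} such that R ∩ M = {A} and φ(R) ⊆ R' for some maximal set R' in D'^{m'×n'} with R' ≠ M' and R' of the same type as M'. -/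
open Matrix

/-- The standard maximal set of type one: matrices whose rows other than the first are zero. -/
def M1set (D : Type) [DivisionRing D] (m n : ℕ) : Set (Matrix (Fin m) (Fin n) D) :=
  {X | ∀ i j, i.val ≠ 0 → X i j = 0}

/-- The standard maximal set of type two: matrices whose columns other than the first are zero. -/
def N1set (D : Type) [DivisionRing D] (m n : ℕ) : Set (Matrix (Fin m) (Fin n) D) :=
  {X | ∀ i j, j.val ≠ 0 → X i j = 0}

/-- A maximal set of type one: a set of the form `P·M₁ + A` with `P` invertible. -/
def IsTypeOne {D : Type} [DivisionRing D] {m n : ℕ} (S : Set (Matrix (Fin m) (Fin n) D)) : Prop :=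
  ∃ P : Matrix (Fin m) (Fin m) D, ∃ A : Matrix (Fin m) (Fin n) D,
    IsUnit P ∧ S = (fun X => P * X + A) '' M1set D m n

/-- A maximal set of type two: a set of the form `N₁·Q + A` with `Q` invertible. -/
def IsTypeTwo {D : Type} [DivisionRing D] {m n : ℕ} (S : Set (Matrix (Fin m) (Fin n) D)) : Prop :=
  ∃ Q : Matrix (Fin n) (Fin n) D, ∃ A : Matrix (Fin m) (Fin n) D,
    IsUnit Q ∧ S = (fun X => X * Q + A) '' N1set D m n

/-- A maximal set (maximal clique of the adjacency graph): of type one or type two. -/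
def IsMaximalSet {D : Type} [DivisionRing D] {m n : ℕ}
    (S : Set (Matrix (Fin m) (Fin n) D)) : Prop :=
  IsTypeOne S ∨ IsTypeTwo S

/-- A graph homomorphism `φ` is degenerate if there is a matrix `A` of rank at most one and two
maximal sets of different types `Ms`, `Ns` in the target with `φ A ∈ Ms ∩ Ns` and the image of
the unit ball around `A` contained in `Ms ∪ Ns`. -/
def Degenerate {D D' : Type} [DivisionRing D] [DivisionRing D'] {m n m' n' : ℕ}
    (φ : Matrix (Fin m) (Fin n) D → Matrix (Fin m') (Fin n') D') : Prop :=
  ∃ A : Matrix (Fin m) (Fin n) D, mrank A ≤ 1 ∧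
    ∃ Ms Ns : Set (Matrix (Fin m') (Fin n') D'),
      IsTypeOne Ms ∧ IsTypeTwo Ns ∧ φ A ∈ Ms ∩ Ns ∧
      φ '' {X | mrank (X - A) ≤ 1} ⊆ Ms ∪ Ns

/-!
Fix `A ∈ M`; as `0 ∈ M`, `rank A ≤ 1`. Call a maximal set `R` of the type of `M` with `R ∩ M = {A}`
a transversal. Every matrix adjacent to `A` lies in `M` or in a transversal, and for transversals
`R₁`, `R₂` every `X₁ ∈ R₁ ∖ {A}` lies, together with `A` and points of `R₂ ∖ {A}` and `M ∖ {A}`, in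
a maximal set of the other type.

If the conclusion fails, every maximal set of the type of `M'` that contains the image of a
transversal is `M'`. Images of cliques lie in maximal sets, and two maximal sets of the same type
sharing two points coincide. Hence either all transversals map into `M'`, or some transversal maps
into a maximal set `W` of the other type and then, through the linking sets, every transversal maps
into `M'` or `W`. Either way `φ` maps the unit ball around `A` into the union of two maximal sets of
different types through `φ A`, so `φ` is degenerate.
-/

section

variable {D : Type} [DivisionRing D] {m n : ℕ}

open MulOpposite

lemma mrank_eq_zero_iff {X : Matrix (Fin m) (Fin n) D} : mrank X = 0 ↔ X = 0 := by
  rw [mrank, Submodule.finrank_eq_zero, Submodule.span_eq_bot, Set.forall_mem_range]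
  exact ⟨fun h => funext h, fun h i => congrFun h i⟩

lemma mrank_le_one_iff {X : Matrix (Fin m) (Fin n) D} :
    mrank X ≤ 1 ↔ ∃ (c : Fin m → D) (r : Fin n → D), X = vecMulVec c r := by
  constructor
  · intro h
    obtain ⟨r, hr⟩ := (Submodule.finrank_le_one_iff_isPrincipal _).1 h
    have hrow : ∀ i, ∃ a : D, a • r = X i := fun i =>
      Submodule.mem_span_singleton.1 (hr ▸ Submodule.subset_span ⟨i, rfl⟩)
    choose c hc using hrow
    exact ⟨c, r, funext fun i => funext fun j => by simp [← hc i, vecMulVec_apply]⟩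
  · rintro ⟨c, r, rfl⟩
    have hle : Submodule.span D (Set.range fun i j => vecMulVec c r i j) ≤ D ∙ r :=
      Submodule.span_le.2 <| Set.range_subset_iff.2 fun i =>
        Submodule.mem_span_singleton.2 ⟨c i, funext fun j => rfl⟩
    calc mrank (vecMulVec c r) ≤ Module.finrank D (D ∙ r) := Submodule.finrank_mono hle
      _ ≤ 1 := by simpa using finrank_span_le_card ({r} : Set (Fin n → D))

lemma vecMulVec_eq_zero_iff {c : Fin m → D} {r : Fin n → D} :
    vecMulVec c r = 0 ↔ c = 0 ∨ r = 0 := by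
  simp only [← Matrix.ext_iff, vecMulVec_apply, Matrix.zero_apply, mul_eq_zero, funext_iff,
    Pi.zero_apply, forall_or_left, forall_or_right]

lemma mrank_eq_one_iff {X : Matrix (Fin m) (Fin n) D} :
    mrank X = 1 ↔ ∃ (c : Fin m → D) (r : Fin n → D), c ≠ 0 ∧ r ≠ 0 ∧ X = vecMulVec c r := by
  have : mrank X = 1 ↔ mrank X ≤ 1 ∧ X ≠ 0 := by
    rw [ne_eq, ← mrank_eq_zero_iff]; omega
  rw [this, mrank_le_one_iff]
  constructor
  · rintro ⟨⟨c, r, rfl⟩, h⟩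
    rw [ne_eq, vecMulVec_eq_zero_iff, not_or] at h
    exact ⟨c, r, h.1, h.2, rfl⟩
  · rintro ⟨c, r, hc, hr, rfl⟩
    exact ⟨⟨c, r, rfl⟩, by rw [ne_eq, vecMulVec_eq_zero_iff]; tauto⟩

lemma ne_zero_of_sub_eq_vecMulVec {X A : Matrix (Fin m) (Fin n) D} {c : Fin m → D}
    {r : Fin n → D} (h : X - A = vecMulVec c r) (hXA : X ≠ A) : c ≠ 0 ∧ r ≠ 0 := by
  rwa [← sub_ne_zero, h, ne_eq, vecMulVec_eq_zero_iff, not_or] at hXA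

lemma vecMulVec_add_ne_self {c : Fin m → D} {r : Fin n → D} (hc : c ≠ 0) (hr : r ≠ 0)
    (A : Matrix (Fin m) (Fin n) D) : vecMulVec c r + A ≠ A := by
  rw [ne_eq, add_eq_right, vecMulVec_eq_zero_iff]
  tauto

def Adjacent (X Y : Matrix (Fin m) (Fin n) D) : Prop := mrank (X - Y) = 1

lemma Adjacent.ne {X Y : Matrix (Fin m) (Fin n) D} (h : Adjacent X Y) : X ≠ Y := by
  rintro rfl
  rw [Adjacent, sub_self, mrank_eq_zero_iff.2 rfl] at h
  exact zero_ne_one h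

lemma mrank_sub_le_one_of_pairwise {K : Set (Matrix (Fin m) (Fin n) D)} (hK : K.Pairwise Adjacent)
    {X Y : Matrix (Fin m) (Fin n) D} (hX : X ∈ K) (hY : Y ∈ K) : mrank (X - Y) ≤ 1 := by
  rcases eq_or_ne X Y with rfl | hXY
  · rw [sub_self, mrank_eq_zero_iff.2 rfl]; exact zero_le_one
  · exact (hK hX hY hXY).le

lemma exists_eq_op_smul_of_vecMulVec_eq {c c' : Fin m → D} {s s' : Fin n → D}
    (h : vecMulVec c s = vecMulVec c' s') (hs' : s' ≠ 0) : ∃ l : D, c' = op l • c := by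
  obtain ⟨j, hj⟩ := Function.ne_iff.1 hs'
  refine ⟨s j * (s' j)⁻¹, funext fun i => ?_⟩
  have hij : c i * s j = c' i * s' j := congrFun (congrFun h i) j
  rw [Pi.smul_apply, op_smul_eq_mul, ← mul_assoc, hij, mul_inv_cancel_right₀ hj]

lemma exists_eq_smul_of_vecMulVec_eq {d d' : Fin m → D} {r r' : Fin n → D}
    (h : vecMulVec d r = vecMulVec d' r') (hd' : d' ≠ 0) : ∃ l : D, r' = l • r := by
  obtain ⟨i, hi⟩ := Function.ne_iff.1 hd'
  refine ⟨(d' i)⁻¹ * d i, funext fun j => ?_⟩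
  have hij : d i * r j = d' i * r' j := congrFun (congrFun h i) j
  rw [Pi.smul_apply, smul_eq_mul, mul_assoc, hij, inv_mul_cancel_left₀ hi]

lemma exists_eq_op_smul_or_exists_eq_smul_of_mrank_sub_le_one {x y : Fin m → D}
    {a b : Fin n → D} (hx : x ≠ 0) (hb : b ≠ 0)
    (h : mrank (vecMulVec x a - vecMulVec y b) ≤ 1) :
    (∃ l : D, y = op l • x) ∨ ∃ μ : D, a = μ • b := by
  by_contra! hne
  obtain ⟨hy, ha⟩ := hne
  have hab : LinearIndependent D ![a, b] :=
    linearIndependent_fin2.2 ⟨by simpa using hb, fun μ h => ha μ (by simpa using h.symm)⟩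
  obtain ⟨c, r, hcr⟩ := mrank_le_one_iff.1 h
  have hrow : ∀ i, x i • a + (-y i) • b = c i • r := fun i => funext fun j => by
    simpa [vecMulVec_apply, sub_eq_add_neg] using congrFun (congrFun hcr i) j
  obtain ⟨i₀, hi₀⟩ := Function.ne_iff.1 hx
  have hc : c i₀ ≠ 0 := fun hc => hi₀ <|
    (LinearIndependent.pair_iff.1 hab _ _ (by rw [hrow, hc, zero_smul])).1
  have hxy : ∀ i, x i = c i * (c i₀)⁻¹ * x i₀ ∧ -y i = c i * (c i₀)⁻¹ * -y i₀ := fun i =>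
    hab.eq_of_pair <| by
      rw [hrow, mul_smul _ (x i₀), mul_smul _ (-y i₀), ← smul_add, hrow, smul_smul,
        inv_mul_cancel_right₀ hc]
  refine hy ((x i₀)⁻¹ * y i₀) (funext fun i => ?_)
  rw [Pi.smul_apply, op_smul_eq_mul, (hxy i).1, mul_assoc, mul_inv_cancel_left₀ hi₀,
    ← neg_inj, (hxy i).2, mul_neg]

def typeOneSet (c : Fin m → D) (A : Matrix (Fin m) (Fin n) D) : Set (Matrix (Fin m) (Fin n) D) :=
  {X | ∃ r, X - A = vecMulVec c r}

def typeTwoSet (r : Fin n → D) (A : Matrix (Fin m) (Fin n) D) : Set (Matrix (Fin m) (Fin n) D) :=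
  {X | ∃ d, X - A = vecMulVec d r}

section TypeSets

variable {A A' B U V : Matrix (Fin m) (Fin n) D} {c c' : Fin m → D} {r r' : Fin n → D}

lemma self_mem_typeOneSet (c : Fin m → D) (A : Matrix (Fin m) (Fin n) D) : A ∈ typeOneSet c A :=
  ⟨0, by ext; simp [vecMulVec_apply]⟩

lemma self_mem_typeTwoSet (r : Fin n → D) (A : Matrix (Fin m) (Fin n) D) : A ∈ typeTwoSet r A :=
  ⟨0, by ext; simp [vecMulVec_apply]⟩

lemma typeOneSet_eq_of_mem (hB : B ∈ typeOneSet c A) : typeOneSet c B = typeOneSet c A := by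
  obtain ⟨s, hs⟩ := hB
  ext X
  refine ⟨fun ⟨r, hr⟩ => ⟨r + s, ?_⟩, fun ⟨r, hr⟩ => ⟨r - s, ?_⟩⟩
  · rw [vecMulVec_add, ← hr, ← hs, sub_add_sub_cancel]
  · rw [vecMulVec_sub, ← hr, ← hs, sub_sub_sub_cancel_right]

lemma typeTwoSet_eq_of_mem (hB : B ∈ typeTwoSet r A) : typeTwoSet r B = typeTwoSet r A := by
  obtain ⟨s, hs⟩ := hB
  ext X
  refine ⟨fun ⟨d, hd⟩ => ⟨d + s, ?_⟩, fun ⟨d, hd⟩ => ⟨d - s, ?_⟩⟩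
  · rw [add_vecMulVec, ← hd, ← hs, sub_add_sub_cancel]
  · rw [sub_vecMulVec, ← hd, ← hs, sub_sub_sub_cancel_right]

lemma typeOneSet_op_smul {l : D} (hl : l ≠ 0) (c : Fin m → D) (A : Matrix (Fin m) (Fin n) D) :
    typeOneSet (op l • c) A = typeOneSet c A := by
  ext X
  refine ⟨fun ⟨r, hr⟩ => ⟨l • r, ?_⟩, fun ⟨r, hr⟩ => ⟨l⁻¹ • r, ?_⟩⟩
  · rw [hr, vecMulVec_smul']
  · rw [hr, vecMulVec_smul', smul_smul, ← op_mul, mul_inv_cancel₀ hl, op_one, one_smul]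

lemma typeTwoSet_smul {l : D} (hl : l ≠ 0) (r : Fin n → D) (A : Matrix (Fin m) (Fin n) D) :
    typeTwoSet (l • r) A = typeTwoSet r A := by
  ext X
  refine ⟨fun ⟨d, hd⟩ => ⟨op l • d, ?_⟩, fun ⟨d, hd⟩ => ⟨op l⁻¹ • d, ?_⟩⟩
  · rw [hd, vecMulVec_smul']
  · rw [hd, vecMulVec_smul', smul_smul, ← op_mul, inv_mul_cancel₀ hl,
      op_one, one_smul]

lemma pairwise_adjacent_typeOneSet (hc : c ≠ 0) (A : Matrix (Fin m) (Fin n) D) :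
    (typeOneSet c A).Pairwise Adjacent := by
  rintro X ⟨r, hr⟩ Y ⟨s, hs⟩ hXY
  rw [Adjacent, ← sub_sub_sub_cancel_right X Y A, hr, hs, ← vecMulVec_sub]
  refine mrank_eq_one_iff.2 ⟨c, r - s, hc, fun h => hXY ?_, rfl⟩
  rw [← sub_left_inj, hr, hs, sub_eq_zero.1 h]

lemma pairwise_adjacent_typeTwoSet (hr : r ≠ 0) (A : Matrix (Fin m) (Fin n) D) :
    (typeTwoSet r A).Pairwise Adjacent := by
  rintro X ⟨d, hd⟩ Y ⟨e, he⟩ hXY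
  rw [Adjacent, ← sub_sub_sub_cancel_right X Y A, hd, he, ← sub_vecMulVec]
  refine mrank_eq_one_iff.2 ⟨d - e, r, fun h => hXY ?_, hr, rfl⟩
  rw [← sub_left_inj, hd, he, sub_eq_zero.1 h]

lemma typeOneSet_eq_of_mem_of_mem (hc' : c' ≠ 0) (hU : U ∈ typeOneSet c A)
    (hU' : U ∈ typeOneSet c' A') (hV : V ∈ typeOneSet c A) (hV' : V ∈ typeOneSet c' A')
    (hUV : U ≠ V) : typeOneSet c A = typeOneSet c' A' := by
  rw [← typeOneSet_eq_of_mem hU] at hV ⊢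
  rw [← typeOneSet_eq_of_mem hU'] at hV' ⊢
  obtain ⟨s, hs⟩ := hV
  obtain ⟨s', hs'⟩ := hV'
  obtain ⟨l, rfl⟩ := exists_eq_op_smul_of_vecMulVec_eq (hs.symm.trans hs')
    (ne_zero_of_sub_eq_vecMulVec hs' hUV.symm).2
  have hl : l ≠ 0 := by rintro rfl; simp at hc'
  rw [typeOneSet_op_smul hl]

lemma typeTwoSet_eq_of_mem_of_mem (hr' : r' ≠ 0) (hU : U ∈ typeTwoSet r A)
    (hU' : U ∈ typeTwoSet r' A') (hV : V ∈ typeTwoSet r A) (hV' : V ∈ typeTwoSet r' A')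
    (hUV : U ≠ V) : typeTwoSet r A = typeTwoSet r' A' := by
  rw [← typeTwoSet_eq_of_mem hU] at hV ⊢
  rw [← typeTwoSet_eq_of_mem hU'] at hV' ⊢
  obtain ⟨d, hd⟩ := hV
  obtain ⟨d', hd'⟩ := hV'
  obtain ⟨l, rfl⟩ := exists_eq_smul_of_vecMulVec_eq (hd.symm.trans hd')
    (ne_zero_of_sub_eq_vecMulVec hd' hUV.symm).1
  have hl : l ≠ 0 := by rintro rfl; simp at hr'
  rw [typeTwoSet_smul hl]

end TypeSets

lemma isUnit_one_add_vecMulVec {u v : Fin m → D} (h : 1 + v ⬝ᵥ u ≠ 0) :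
    IsUnit (1 + vecMulVec u v) := by
  set t := (1 + v ⬝ᵥ u)⁻¹
  have ht : t + v ⬝ᵥ u * t = 1 := by rw [← one_add_mul, mul_inv_cancel₀ h]
  have ht' : t + t * v ⬝ᵥ u = 1 := by rw [← mul_one_add, inv_mul_cancel₀ h]
  refine ⟨⟨_, 1 - vecMulVec u (t • v), ?_, ?_⟩, rfl⟩
  · rw [mul_sub, mul_one, add_mul, one_mul, vecMulVec_mul_vecMulVec, smul_smul, add_sub_assoc,
      ← vecMulVec_add, ← add_smul, ht, one_smul, sub_self, add_zero]
  · rw [sub_mul, one_mul, mul_add, mul_one, vecMulVec_mul_vecMulVec, smul_dotProduct,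
      smul_eq_mul, ← vecMulVec_add, ← add_smul, ht', one_smul, add_sub_cancel_right]

lemma single_comp_swap (z k : Fin m) :
    (Pi.single z (1 : D) : Fin m → D) ∘ Equiv.swap z k = Pi.single k 1 := by
  ext i
  simp [Pi.single_apply, Equiv.swap_apply_eq_iff]

lemma isUnit_swap (i j : Fin m) : IsUnit (swap D i j) :=
  ⟨⟨_, _, swap_mul_self i j, swap_mul_self i j⟩, rfl⟩

lemma exists_isUnit_col_eq {c : Fin m → D} (hc : c ≠ 0) (z : Fin m) :
    ∃ P : Matrix (Fin m) (Fin m) D, IsUnit P ∧ P.col z = c := by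
  obtain ⟨k, hk⟩ := Function.ne_iff.1 hc
  have hunit : IsUnit (1 + vecMulVec (c - Pi.single k 1) (Pi.single k 1)) :=
    isUnit_one_add_vecMulVec (by simpa using hk)
  refine ⟨_ * swap D z k, hunit.mul (isUnit_swap z k), ?_⟩
  rw [← mulVec_single_one, ← mulVec_mulVec, swap_mulVec, single_comp_swap, add_mulVec,
    one_mulVec, vecMulVec_mulVec, single_dotProduct, Pi.single_eq_same, one_mul, op_one, one_smul,
    add_sub_cancel]

lemma exists_isUnit_row_eq {r : Fin n → D} (hr : r ≠ 0) (z : Fin n) :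
    ∃ Q : Matrix (Fin n) (Fin n) D, IsUnit Q ∧ Q.row z = r := by
  obtain ⟨k, hk⟩ := Function.ne_iff.1 hr
  have hunit : IsUnit (1 + vecMulVec (Pi.single k 1) (r - Pi.single k 1)) :=
    isUnit_one_add_vecMulVec (by simpa using hk)
  refine ⟨swap D z k * _, (isUnit_swap z k).mul hunit, ?_⟩
  rw [← single_one_vecMul, ← vecMul_vecMul, vecMul_swap, single_comp_swap, vecMul_add,
    vecMul_one, vecMul_vecMulVec, single_dotProduct, Pi.single_eq_same, one_mul, one_smul,
    add_sub_cancel]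

lemma M1set_eq_range (hm : 0 < m) :
    M1set D m n = Set.range (vecMulVec (Pi.single ⟨0, hm⟩ 1)) := by
  ext X
  refine ⟨fun hX => ⟨X ⟨0, hm⟩, ?_⟩, ?_⟩
  · ext i j
    by_cases hi : i = ⟨0, hm⟩
    · simp [hi, vecMulVec_apply]
    · simp [hi, vecMulVec_apply, hX i j (fun h => hi (Fin.ext h))]
  · rintro ⟨r, rfl⟩ i j hi
    simp [vecMulVec_apply, Fin.ext_iff, hi]

lemma N1set_eq_range (hn : 0 < n) :
    N1set D m n = Set.range fun d : Fin m → D => vecMulVec d (Pi.single ⟨0, hn⟩ 1) := by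
  ext X
  refine ⟨fun hX => ⟨fun i => X i ⟨0, hn⟩, ?_⟩, ?_⟩
  · ext i j
    by_cases hj : j = ⟨0, hn⟩
    · simp [hj, vecMulVec_apply]
    · simp [hj, vecMulVec_apply, hX i j (fun h => hj (Fin.ext h))]
  · rintro ⟨d, rfl⟩ i j hj
    simp [vecMulVec_apply, Fin.ext_iff, hj]

lemma image_M1set (hm : 0 < m) (P : Matrix (Fin m) (Fin m) D) (A : Matrix (Fin m) (Fin n) D) :
    (fun X => P * X + A) '' M1set D m n = typeOneSet (P.col ⟨0, hm⟩) A := by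
  ext X
  simp [M1set_eq_range hm, typeOneSet, mul_vecMulVec, sub_eq_iff_eq_add, eq_comm]

lemma image_N1set (hn : 0 < n) (Q : Matrix (Fin n) (Fin n) D) (A : Matrix (Fin m) (Fin n) D) :
    (fun X => X * Q + A) '' N1set D m n = typeTwoSet (Q.row ⟨0, hn⟩) A := by
  ext X
  simp [N1set_eq_range hn, typeTwoSet, vecMulVec_mul, sub_eq_iff_eq_add, eq_comm]

lemma isTypeOne_iff (hm : 0 < m) {S : Set (Matrix (Fin m) (Fin n) D)} :
    IsTypeOne S ↔ ∃ c ≠ 0, ∃ A, S = typeOneSet c A := by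
  constructor
  · rintro ⟨P, A, hP, rfl⟩
    refine ⟨P.col ⟨0, hm⟩, fun h => ?_, A, image_M1set hm P A⟩
    rw [← mulVec_single_one, ← P.mulVec_zero] at h
    simpa using mulVec_injective_of_isUnit hP h
  · rintro ⟨c, hc, A, rfl⟩
    obtain ⟨P, hP, rfl⟩ := exists_isUnit_col_eq hc ⟨0, hm⟩
    exact ⟨P, A, hP, (image_M1set hm P A).symm⟩

lemma isTypeTwo_iff (hn : 0 < n) {S : Set (Matrix (Fin m) (Fin n) D)} :
    IsTypeTwo S ↔ ∃ r ≠ 0, ∃ A, S = typeTwoSet r A := by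
  constructor
  · rintro ⟨Q, A, hQ, rfl⟩
    refine ⟨Q.row ⟨0, hn⟩, fun h => ?_, A, image_N1set hn Q A⟩
    rw [← single_one_vecMul, ← Q.zero_vecMul] at h
    simpa using vecMul_injective_of_isUnit hQ h
  · rintro ⟨r, hr, A, rfl⟩
    obtain ⟨Q, hQ, rfl⟩ := exists_isUnit_row_eq hr ⟨0, hn⟩
    exact ⟨Q, A, hQ, (image_N1set hn Q A).symm⟩

lemma isTypeOne_typeOneSet (hm : 0 < m) {c : Fin m → D} (hc : c ≠ 0)
    (A : Matrix (Fin m) (Fin n) D) : IsTypeOne (typeOneSet c A) :=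
  (isTypeOne_iff hm).2 ⟨c, hc, A, rfl⟩

lemma isTypeTwo_typeTwoSet (hn : 0 < n) {r : Fin n → D} (hr : r ≠ 0)
    (A : Matrix (Fin m) (Fin n) D) : IsTypeTwo (typeTwoSet r A) :=
  (isTypeTwo_iff hn).2 ⟨r, hr, A, rfl⟩

section MaximalSets

variable {S T W : Set (Matrix (Fin m) (Fin n) D)} {U V : Matrix (Fin m) (Fin n) D}

def SameType (S T : Set (Matrix (Fin m) (Fin n) D)) : Prop :=
  (IsTypeOne S ∧ IsTypeOne T) ∨ (IsTypeTwo S ∧ IsTypeTwo T)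

lemma not_isTypeOne_and_isTypeTwo (hm : 0 < m) (hn : 2 ≤ n) : ¬(IsTypeOne S ∧ IsTypeTwo S) := by
  rintro ⟨h1, h2⟩
  obtain ⟨c, hc, A, rfl⟩ := (isTypeOne_iff hm).1 h1
  obtain ⟨r, -, B, hS⟩ := (isTypeTwo_iff (by omega)).1 h2
  have hA : typeTwoSet r A = typeOneSet c A := by
    rw [hS, typeTwoSet_eq_of_mem (hS ▸ self_mem_typeOneSet c A)]
  have hmul : ∀ s : Fin n → D, ∃ l : D, s = l • r := fun s => by
    obtain ⟨d, hd⟩ : vecMulVec c s + A ∈ typeTwoSet r A := hA ▸ ⟨s, add_sub_cancel_right _ _⟩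
    exact exists_eq_smul_of_vecMulVec_eq (hd.symm.trans (add_sub_cancel_right _ _)) hc
  obtain ⟨l₀, h₀⟩ := hmul (Pi.single ⟨0, by omega⟩ 1)
  obtain ⟨l₁, h₁⟩ := hmul (Pi.single ⟨1, hn⟩ 1)
  have e₀ := congrFun h₀ ⟨0, by omega⟩
  have e₁ := congrFun h₀ ⟨1, hn⟩
  have e₂ := congrFun h₁ ⟨1, hn⟩
  simp only [Pi.single_eq_same, Pi.smul_apply, smul_eq_mul] at e₀ e₂
  rw [Pi.single_eq_of_ne (by simp), Pi.smul_apply, smul_eq_mul, eq_comm, mul_eq_zero] at e₁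
  rcases e₁ with rfl | h
  · simp at e₀
  · simp [h] at e₂

lemma SameType.eq_of_mem_of_mem (hm : 0 < m) (hn : 0 < n) (h : SameType S T) (hUS : U ∈ S)
    (hUT : U ∈ T) (hVS : V ∈ S) (hVT : V ∈ T) (hUV : U ≠ V) : S = T := by
  rcases h with ⟨hS, hT⟩ | ⟨hS, hT⟩
  · obtain ⟨c, -, A, rfl⟩ := (isTypeOne_iff hm).1 hS
    obtain ⟨c', hc', A', rfl⟩ := (isTypeOne_iff hm).1 hT
    exact typeOneSet_eq_of_mem_of_mem hc' hUS hUT hVS hVT hUV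
  · obtain ⟨r, -, A, rfl⟩ := (isTypeTwo_iff hn).1 hS
    obtain ⟨r', hr', A', rfl⟩ := (isTypeTwo_iff hn).1 hT
    exact typeTwoSet_eq_of_mem_of_mem hr' hUS hUT hVS hVT hUV

lemma sameType_of_not_sameType (hS : IsMaximalSet S) (hT : IsMaximalSet T) (hW : IsMaximalSet W)
    (hSW : ¬SameType S W) (hTW : ¬SameType T W) : SameType S T := by
  unfold SameType IsMaximalSet at *
  tauto

lemma exists_isTypeOne_mem (hm : 0 < m) (B : Matrix (Fin m) (Fin n) D) :
    ∃ S, IsTypeOne S ∧ B ∈ S :=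
  ⟨_, isTypeOne_typeOneSet hm (c := Pi.single ⟨0, hm⟩ 1) (by simp) B, self_mem_typeOneSet _ B⟩

lemma exists_isTypeTwo_mem (hn : 0 < n) (B : Matrix (Fin m) (Fin n) D) :
    ∃ S, IsTypeTwo S ∧ B ∈ S :=
  ⟨_, isTypeTwo_typeTwoSet hn (r := Pi.single ⟨0, hn⟩ 1) (by simp) B, self_mem_typeTwoSet _ B⟩

lemma IsMaximalSet.pairwise_adjacent (hm : 0 < m) (hn : 0 < n) (hS : IsMaximalSet S) :
    S.Pairwise Adjacent := by
  rcases hS with hS | hS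
  · obtain ⟨c, hc, A, rfl⟩ := (isTypeOne_iff hm).1 hS
    exact pairwise_adjacent_typeOneSet hc A
  · obtain ⟨r, hr, A, rfl⟩ := (isTypeTwo_iff hn).1 hS
    exact pairwise_adjacent_typeTwoSet hr A

end MaximalSets

lemma mem_typeOneSet_or_mem_typeTwoSet {B X Y : Matrix (Fin m) (Fin n) D} {x : Fin m → D}
    {a : Fin n → D} (hx : x ≠ 0) (ha : a ≠ 0) (hX : X - B = vecMulVec x a)
    (hYB : mrank (Y - B) ≤ 1) (hXY : mrank (X - Y) ≤ 1) :
    Y ∈ typeOneSet x B ∨ Y ∈ typeTwoSet a B := by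
  obtain ⟨y, b, hY⟩ := mrank_le_one_iff.1 hYB
  rcases eq_or_ne b 0 with rfl | hb
  · exact Or.inl ⟨0, hY.trans (by ext; simp [vecMulVec_apply])⟩
  rw [← sub_sub_sub_cancel_right X Y B, hX, hY] at hXY
  rcases exists_eq_op_smul_or_exists_eq_smul_of_mrank_sub_le_one hx hb hXY with ⟨l, rfl⟩ | ⟨l, rfl⟩
  · exact Or.inl ⟨l • b, by rw [hY, vecMulVec_smul']⟩
  · have hl : l ≠ 0 := by rintro rfl; simp at ha
    refine Or.inr ⟨op l⁻¹ • y, ?_⟩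
    rw [hY, ← vecMulVec_smul', smul_smul, inv_mul_cancel₀ hl, one_smul]

lemma exists_isMaximalSet_superset (hm : 0 < m) (hn : 0 < n) {K : Set (Matrix (Fin m) (Fin n) D)}
    (hK : K.Pairwise Adjacent) {B : Matrix (Fin m) (Fin n) D} (hB : B ∈ K) :
    ∃ W, IsMaximalSet W ∧ K ⊆ W := by
  by_cases hKB : K ⊆ {B}
  · obtain ⟨S, hS, hBS⟩ := exists_isTypeOne_mem hm B
    exact ⟨S, Or.inl hS, hKB.trans (Set.singleton_subset_iff.2 hBS)⟩
  obtain ⟨X, hX, hXB⟩ := Set.not_subset.1 hKB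
  obtain ⟨x, a, hx, ha, hXB'⟩ := mrank_eq_one_iff.1 (hK hX hB hXB)
  have hK_sub : ∀ Y ∈ K, Y ∈ typeOneSet x B ∨ Y ∈ typeTwoSet a B := fun Y hY =>
    mem_typeOneSet_or_mem_typeTwoSet hx ha hXB' (mrank_sub_le_one_of_pairwise hK hY hB)
      (mrank_sub_le_one_of_pairwise hK hX hY)
  by_cases hK1 : K ⊆ typeOneSet x B
  · exact ⟨_, Or.inl (isTypeOne_typeOneSet hm hx B), hK1⟩
  obtain ⟨Y, hY, hY1⟩ := Set.not_subset.1 hK1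
  obtain ⟨d, hd⟩ := (hK_sub Y hY).resolve_left hY1
  -- a point of `typeOneSet x B` adjacent to `Y ∉ typeOneSet x B` lies on `typeTwoSet a B`
  refine ⟨_, Or.inr (isTypeTwo_typeTwoSet hn ha B), fun Z hZ => ?_⟩
  refine (hK_sub Z hZ).elim (fun ⟨s, hs⟩ => ?_) id
  have hZY := mrank_sub_le_one_of_pairwise hK hZ hY
  rw [← sub_sub_sub_cancel_right Z Y B, hs, hd] at hZY
  rcases exists_eq_op_smul_or_exists_eq_smul_of_mrank_sub_le_one hx ha hZY with ⟨l, rfl⟩ | ⟨l, rfl⟩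
  · exact absurd ⟨l • a, by rw [hd, vecMulVec_smul']⟩ hY1
  · exact ⟨op l • x, by rw [hs, vecMulVec_smul']⟩

structure IsStarCover (A : Matrix (Fin m) (Fin n) D) (M : Set (Matrix (Fin m) (Fin n) D))
    (𝓡 : Set (Set (Matrix (Fin m) (Fin n) D))) : Prop where
  pairwise : M.Pairwise Adjacent
  mem : A ∈ M
  pairwise_of_mem : ∀ {R}, R ∈ 𝓡 → R.Pairwise Adjacent
  mem_of_mem : ∀ {R}, R ∈ 𝓡 → A ∈ R
  ball_subset : {X | mrank (X - A) ≤ 1} ⊆ M ∪ ⋃₀ 𝓡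
  linked : ∀ R₁ ∈ 𝓡, ∀ R₂ ∈ 𝓡, ∀ X₁ ∈ R₁, X₁ ≠ A → ∃ S : Set (Matrix (Fin m) (Fin n) D),
    S.Pairwise Adjacent ∧ A ∈ S ∧ X₁ ∈ S ∧ (∃ X₂ ∈ R₂, X₂ ∈ S ∧ X₂ ≠ A) ∧ ∃ X ∈ M, X ∈ S ∧ X ≠ A

section Degeneracy

variable {D' : Type} [DivisionRing D'] {m' n' : ℕ}
  {φ : Matrix (Fin m) (Fin n) D → Matrix (Fin m') (Fin n') D'} {A : Matrix (Fin m) (Fin n) D}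
  {M' W : Set (Matrix (Fin m') (Fin n') D')}

lemma degenerate_of_image_subset (hm' : 0 < m') (hn' : 0 < n') (hA : mrank A ≤ 1)
    (hM' : IsMaximalSet M') (hAM' : φ A ∈ M') (h : φ '' {X | mrank (X - A) ≤ 1} ⊆ M') :
    Degenerate φ := by
  rcases hM' with hM' | hM'
  · obtain ⟨N, hN, hAN⟩ := exists_isTypeTwo_mem hn' (φ A)
    exact ⟨A, hA, M', N, hM', hN, ⟨hAM', hAN⟩, h.trans Set.subset_union_left⟩
  · obtain ⟨N, hN, hAN⟩ := exists_isTypeOne_mem hm' (φ A)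
    exact ⟨A, hA, N, M', hN, hM', ⟨hAN, hAM'⟩, h.trans Set.subset_union_right⟩

lemma degenerate_of_image_subset_union (hA : mrank A ≤ 1) (hM' : IsMaximalSet M')
    (hW : IsMaximalSet W) (hWM' : ¬SameType W M') (hAM' : φ A ∈ M') (hAW : φ A ∈ W)
    (h : φ '' {X | mrank (X - A) ≤ 1} ⊆ M' ∪ W) : Degenerate φ := by
  rcases hM' with hM' | hM'
  · have hW2 : IsTypeTwo W := hW.resolve_left fun hW1 => hWM' (Or.inl ⟨hW1, hM'⟩)
    exact ⟨A, hA, M', W, hM', hW2, ⟨hAM', hAW⟩, h⟩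
  · have hW1 : IsTypeOne W := hW.resolve_right fun hW2 => hWM' (Or.inr ⟨hW2, hM'⟩)
    exact ⟨A, hA, W, M', hW1, hM', ⟨hAW, hAM'⟩, h.trans (Set.union_comm _ _).le⟩

lemma image_subset_or_eq_of_not_sameType (hm' : 0 < m') (hn' : 0 < n')
    (hhom : ∀ X Y, Adjacent X Y → Adjacent (φ X) (φ Y)) {M : Set (Matrix (Fin m) (Fin n) D)}
    {𝓡 : Set (Set (Matrix (Fin m) (Fin n) D))} (hstar : IsStarCover A M 𝓡)
    (hM' : IsMaximalSet M') (hMM' : φ '' M ⊆ M') {R₁ R₂ : Set (Matrix (Fin m) (Fin n) D)}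
    (hR₁ : R₁ ∈ 𝓡) (hR₂ : R₂ ∈ 𝓡) {W₁ W₂ : Set (Matrix (Fin m') (Fin n') D')}
    (hW₁ : IsMaximalSet W₁) (hW₂ : IsMaximalSet W₂) (hRW₁ : φ '' R₁ ⊆ W₁) (hRW₂ : φ '' R₂ ⊆ W₂)
    (hW₁M' : ¬SameType W₁ M') (hW₂M' : ¬SameType W₂ M') : φ '' R₁ ⊆ M' ∨ W₂ = W₁ := by
  have hφ : ∀ {K : Set (Matrix (Fin m) (Fin n) D)}, K.Pairwise Adjacent →
      ∀ {Y Z}, Y ∈ K → Z ∈ K → Y ≠ Z → φ Y ≠ φ Z := fun hK _ _ hY hZ hYZ =>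
    (hhom _ _ (hK hY hZ hYZ)).ne
  have hAR₁ := hstar.mem_of_mem hR₁
  have hAR₂ := hstar.mem_of_mem hR₂
  refine or_iff_not_imp_right.2 fun hne => ?_
  rintro _ ⟨X₁, hX₁, rfl⟩
  rcases eq_or_ne X₁ A with rfl | hX₁A
  · exact hMM' ⟨X₁, hstar.mem, rfl⟩
  obtain ⟨S, hS, hAS, hX₁S, ⟨X₂, hX₂, hX₂S, hX₂A⟩, X, hXM, hXS, hXA⟩ :=
    hstar.linked R₁ hR₁ R₂ hR₂ X₁ hX₁ hX₁A
  obtain ⟨V, hV, hSV⟩ :=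
    exists_isMaximalSet_superset hm' hn' (hS.imp hhom).image (Set.mem_image_of_mem φ hAS)
  by_cases hVM' : SameType V M'
  · have hVM'_eq : V = M' := hVM'.eq_of_mem_of_mem hm' hn' (hSV ⟨X, hXS, rfl⟩)
      (hMM' ⟨X, hXM, rfl⟩) (hSV ⟨A, hAS, rfl⟩) (hMM' ⟨A, hstar.mem, rfl⟩)
      (hφ hstar.pairwise hXM hstar.mem hXA)
    exact hVM'_eq ▸ hSV ⟨X₁, hX₁S, rfl⟩
  have hVW₁ : V = W₁ := (sameType_of_not_sameType hV hW₁ hM' hVM' hW₁M').eq_of_mem_of_mem hm' hn'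
    (hSV ⟨X₁, hX₁S, rfl⟩) (hRW₁ ⟨X₁, hX₁, rfl⟩) (hSV ⟨A, hAS, rfl⟩) (hRW₁ ⟨A, hAR₁, rfl⟩)
    (hφ hS hX₁S hAS hX₁A)
  exact absurd ((sameType_of_not_sameType hW₂ hW₁ hM' hW₂M' hW₁M').eq_of_mem_of_mem hm' hn'
    (hRW₂ ⟨X₂, hX₂, rfl⟩) (hVW₁ ▸ hSV ⟨X₂, hX₂S, rfl⟩) (hRW₂ ⟨A, hAR₂, rfl⟩)
    (hRW₁ ⟨A, hAR₁, rfl⟩) (hφ (hstar.pairwise_of_mem hR₂) hX₂ hAR₂ hX₂A)) hne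

lemma degenerate_of_isStarCover (hm' : 0 < m') (hn' : 0 < n')
    (hhom : ∀ X Y, Adjacent X Y → Adjacent (φ X) (φ Y)) (hA : mrank A ≤ 1)
    {M : Set (Matrix (Fin m) (Fin n) D)} {𝓡 : Set (Set (Matrix (Fin m) (Fin n) D))}
    (hstar : IsStarCover A M 𝓡) (hM' : IsMaximalSet M') (hMM' : φ '' M ⊆ M')
    (hstuck : ∀ R ∈ 𝓡, ∀ W, IsMaximalSet W → φ '' R ⊆ W → SameType W M' → W = M') :
    Degenerate φ := by
  have hsup : ∀ R ∈ 𝓡, ∃ W, IsMaximalSet W ∧ φ '' R ⊆ W := fun R hR =>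
    exists_isMaximalSet_superset hm' hn' ((hstar.pairwise_of_mem hR).imp hhom).image
      (Set.mem_image_of_mem φ (hstar.mem_of_mem hR))
  have hAM' : φ A ∈ M' := hMM' ⟨A, hstar.mem, rfl⟩
  by_cases hall : ∀ R ∈ 𝓡, φ '' R ⊆ M'
  · refine degenerate_of_image_subset hm' hn' hA hM' hAM' ?_
    rintro _ ⟨X, hX, rfl⟩
    rcases hstar.ball_subset hX with hXM | ⟨R, hR, hXR⟩
    · exact hMM' ⟨X, hXM, rfl⟩
    · exact hall R hR ⟨X, hXR, rfl⟩
  push Not at hall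
  obtain ⟨R₁, hR₁, hR₁M'⟩ := hall
  obtain ⟨W₁, hW₁, hRW₁⟩ := hsup R₁ hR₁
  have hW₁M' : ¬SameType W₁ M' := fun h => hR₁M' (hstuck R₁ hR₁ W₁ hW₁ hRW₁ h ▸ hRW₁)
  refine degenerate_of_image_subset_union hA hM' hW₁ hW₁M' hAM'
    (hRW₁ ⟨A, hstar.mem_of_mem hR₁, rfl⟩) ?_
  rintro _ ⟨X, hX, rfl⟩
  rcases hstar.ball_subset hX with hXM | ⟨R, hR, hXR⟩
  · exact Or.inl (hMM' ⟨X, hXM, rfl⟩)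
  obtain ⟨W, hW, hRW⟩ := hsup R hR
  by_cases hWM' : SameType W M'
  · exact Or.inl (hstuck R hR W hW hRW hWM' ▸ hRW ⟨X, hXR, rfl⟩)
  · have hWW₁ := (image_subset_or_eq_of_not_sameType hm' hn' hhom hstar hM' hMM' hR₁ hR hW₁ hW
      hRW₁ hRW hW₁M' hWM').resolve_left hR₁M'
    exact Or.inr (hWW₁ ▸ hRW ⟨X, hXR, rfl⟩)

end Degeneracy

def transversals (M : Set (Matrix (Fin m) (Fin n) D)) (A : Matrix (Fin m) (Fin n) D) :
    Set (Set (Matrix (Fin m) (Fin n) D)) :=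
  {R | (IsTypeOne M → IsTypeOne R) ∧ (IsTypeTwo M → IsTypeTwo R) ∧ R ∩ M = {A}}

section Transversals

variable {S : Set (Matrix (Fin m) (Fin n) D)} {A : Matrix (Fin m) (Fin n) D}
  {c c₁ : Fin m → D} {r r₁ : Fin n → D}

lemma IsTypeOne.exists_eq_typeOneSet (hm : 0 < m) (hS : IsTypeOne S) (hA : A ∈ S) :
    ∃ c ≠ 0, S = typeOneSet c A := by
  obtain ⟨c, hc, A₀, rfl⟩ := (isTypeOne_iff hm).1 hS
  exact ⟨c, hc, (typeOneSet_eq_of_mem hA).symm⟩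

lemma IsTypeTwo.exists_eq_typeTwoSet (hn : 0 < n) (hS : IsTypeTwo S) (hA : A ∈ S) :
    ∃ r ≠ 0, S = typeTwoSet r A := by
  obtain ⟨r, hr, A₀, rfl⟩ := (isTypeTwo_iff hn).1 hS
  exact ⟨r, hr, (typeTwoSet_eq_of_mem hA).symm⟩

lemma mem_of_mem_transversals {M R : Set (Matrix (Fin m) (Fin n) D)} (hR : R ∈ transversals M A) :
    A ∈ R :=
  (Set.eq_singleton_iff_unique_mem.1 hR.2.2).1.1

lemma typeOneSet_inter_typeOneSet (h : ∀ l : D, c₁ ≠ op l • c) :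
    typeOneSet c₁ A ∩ typeOneSet c A = {A} := by
  refine Set.eq_singleton_iff_unique_mem.2 ⟨⟨self_mem_typeOneSet _ _, self_mem_typeOneSet _ _⟩, ?_⟩
  rintro X ⟨⟨s, hs⟩, ⟨u, hu⟩⟩
  by_contra hXA
  obtain ⟨l, hl⟩ := exists_eq_op_smul_of_vecMulVec_eq (hu.symm.trans hs)
    (ne_zero_of_sub_eq_vecMulVec hs hXA).2
  exact h l hl

lemma typeTwoSet_inter_typeTwoSet (h : ∀ l : D, r₁ ≠ l • r) :
    typeTwoSet r₁ A ∩ typeTwoSet r A = {A} := by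
  refine Set.eq_singleton_iff_unique_mem.2 ⟨⟨self_mem_typeTwoSet _ _, self_mem_typeTwoSet _ _⟩, ?_⟩
  rintro X ⟨⟨d, hd⟩, ⟨e, he⟩⟩
  by_contra hXA
  obtain ⟨l, hl⟩ := exists_eq_smul_of_vecMulVec_eq (he.symm.trans hd)
    (ne_zero_of_sub_eq_vecMulVec hd hXA).1
  exact h l hl

lemma typeOneSet_mem_transversals (hm : 0 < m) (hn : 2 ≤ n) (hc : c ≠ 0)
    (h : ∀ l : D, c₁ ≠ op l • c) : typeOneSet c₁ A ∈ transversals (typeOneSet c A) A := by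
  have hc₁ : c₁ ≠ 0 := fun h₀ => h 0 (by rw [h₀, op_zero, zero_smul])
  exact ⟨fun _ => isTypeOne_typeOneSet hm hc₁ A,
    fun h2 => absurd ⟨isTypeOne_typeOneSet hm hc A, h2⟩ (not_isTypeOne_and_isTypeTwo hm hn),
    typeOneSet_inter_typeOneSet h⟩

lemma typeTwoSet_mem_transversals (hm : 0 < m) (hn : 2 ≤ n) (hr : r ≠ 0)
    (h : ∀ l : D, r₁ ≠ l • r) : typeTwoSet r₁ A ∈ transversals (typeTwoSet r A) A := by
  have hr₁ : r₁ ≠ 0 := fun h₀ => h 0 (by rw [h₀, zero_smul])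
  exact ⟨fun h1 => absurd ⟨h1, isTypeTwo_typeTwoSet (by omega) hr A⟩
    (not_isTypeOne_and_isTypeTwo hm hn), fun _ => isTypeTwo_typeTwoSet (by omega) hr₁ A,
    typeTwoSet_inter_typeTwoSet h⟩

lemma ball_subset_typeOneSet_union (hm : 0 < m) (hn : 2 ≤ n) (hc : c ≠ 0) :
    {X | mrank (X - A) ≤ 1} ⊆ typeOneSet c A ∪ ⋃₀ transversals (typeOneSet c A) A := by
  intro X hX
  obtain ⟨c₁, s, hs⟩ := mrank_le_one_iff.1 hX
  by_cases h : ∃ l : D, c₁ = op l • c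
  · obtain ⟨l, rfl⟩ := h
    exact Or.inl ⟨l • s, by rw [hs, vecMulVec_smul']⟩
  push Not at h
  exact Or.inr ⟨_, typeOneSet_mem_transversals hm hn hc h, s, hs⟩

lemma ball_subset_typeTwoSet_union (hm : 0 < m) (hn : 2 ≤ n) (hr : r ≠ 0) :
    {X | mrank (X - A) ≤ 1} ⊆ typeTwoSet r A ∪ ⋃₀ transversals (typeTwoSet r A) A := by
  intro X hX
  obtain ⟨d, r₁, hd⟩ := mrank_le_one_iff.1 hX
  by_cases h : ∃ l : D, r₁ = l • r
  · obtain ⟨l, rfl⟩ := h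
    exact Or.inl ⟨op l • d, by rw [hd, vecMulVec_smul']⟩
  push Not at h
  exact Or.inr ⟨_, typeTwoSet_mem_transversals hm hn hr h, d, hd⟩

lemma isStarCover_typeOneSet (hm : 0 < m) (hn : 2 ≤ n) (hc : c ≠ 0) :
    IsStarCover A (typeOneSet c A) (transversals (typeOneSet c A) A) := by
  have hM := isTypeOne_typeOneSet hm hc A
  refine ⟨pairwise_adjacent_typeOneSet hc A, self_mem_typeOneSet c A,
    fun hR => IsMaximalSet.pairwise_adjacent hm (by omega) (Or.inl (hR.1 hM)),
    mem_of_mem_transversals, ball_subset_typeOneSet_union hm hn hc, ?_⟩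
  intro R₁ hR₁ R₂ hR₂ X₁ hX₁ hX₁A
  obtain ⟨c₁, hc₁, rfl⟩ := (hR₁.1 hM).exists_eq_typeOneSet hm (mem_of_mem_transversals hR₁)
  obtain ⟨c₂, hc₂, rfl⟩ := (hR₂.1 hM).exists_eq_typeOneSet hm (mem_of_mem_transversals hR₂)
  obtain ⟨s, hs⟩ := hX₁
  have hs0 := (ne_zero_of_sub_eq_vecMulVec hs hX₁A).2
  exact ⟨typeTwoSet s A, pairwise_adjacent_typeTwoSet hs0 A, self_mem_typeTwoSet s A, ⟨c₁, hs⟩,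
    ⟨vecMulVec c₂ s + A, ⟨s, add_sub_cancel_right _ _⟩, ⟨c₂, add_sub_cancel_right _ _⟩,
      vecMulVec_add_ne_self hc₂ hs0 A⟩,
    vecMulVec c s + A, ⟨s, add_sub_cancel_right _ _⟩, ⟨c, add_sub_cancel_right _ _⟩,
      vecMulVec_add_ne_self hc hs0 A⟩

lemma isStarCover_typeTwoSet (hm : 0 < m) (hn : 2 ≤ n) (hr : r ≠ 0) :
    IsStarCover A (typeTwoSet r A) (transversals (typeTwoSet r A) A) := by
  have hM := isTypeTwo_typeTwoSet (by omega) hr A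
  refine ⟨pairwise_adjacent_typeTwoSet hr A, self_mem_typeTwoSet r A,
    fun hR => IsMaximalSet.pairwise_adjacent hm (by omega) (Or.inr (hR.2.1 hM)),
    mem_of_mem_transversals, ball_subset_typeTwoSet_union hm hn hr, ?_⟩
  intro R₁ hR₁ R₂ hR₂ X₁ hX₁ hX₁A
  obtain ⟨r₁, hr₁, rfl⟩ :=
    (hR₁.2.1 hM).exists_eq_typeTwoSet (by omega) (mem_of_mem_transversals hR₁)
  obtain ⟨r₂, hr₂, rfl⟩ :=
    (hR₂.2.1 hM).exists_eq_typeTwoSet (by omega) (mem_of_mem_transversals hR₂)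
  obtain ⟨d, hd⟩ := hX₁
  have hd0 := (ne_zero_of_sub_eq_vecMulVec hd hX₁A).1
  exact ⟨typeOneSet d A, pairwise_adjacent_typeOneSet hd0 A, self_mem_typeOneSet d A, ⟨r₁, hd⟩,
    ⟨vecMulVec d r₂ + A, ⟨d, add_sub_cancel_right _ _⟩, ⟨r₂, add_sub_cancel_right _ _⟩,
      vecMulVec_add_ne_self hd0 hr₂ A⟩,
    vecMulVec d r + A, ⟨d, add_sub_cancel_right _ _⟩, ⟨r, add_sub_cancel_right _ _⟩,
      vecMulVec_add_ne_self hd0 hr A⟩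

lemma isStarCover_transversals (hm : 0 < m) (hn : 2 ≤ n) {M : Set (Matrix (Fin m) (Fin n) D)}
    (hM : IsMaximalSet M) (hA : A ∈ M) : IsStarCover A M (transversals M A) := by
  rcases hM with hM | hM
  · obtain ⟨c, hc, rfl⟩ := hM.exists_eq_typeOneSet hm hA
    exact isStarCover_typeOneSet hm hn hc
  · obtain ⟨r, hr, rfl⟩ := hM.exists_eq_typeTwoSet (by omega) hA
    exact isStarCover_typeTwoSet hm hn hr

end Transversals

end

theorem nondegenerate_extension_same_type_general
    {D D' : Type} [DivisionRing D] [DivisionRing D'] {m n m' n' : ℕ}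
    (hm : 2 ≤ m) (hn : 2 ≤ n) (hm' : 2 ≤ m') (hn' : 2 ≤ n')
    (φ : Matrix (Fin m) (Fin n) D → Matrix (Fin m') (Fin n') D')
    (hhom : ∀ X Y, mrank (X - Y) = 1 → mrank (φ X - φ Y) = 1)
    (hnd : ¬ Degenerate φ)
    (M : Set (Matrix (Fin m) (Fin n) D)) (hMmax : IsMaximalSet M) (h0M : (0 : Matrix (Fin m) (Fin n) D) ∈ M)
    (M' : Set (Matrix (Fin m') (Fin n') D')) (hM'max : IsMaximalSet M')
    (hφM : φ '' M ⊆ M') :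
    ∀ A ∈ M, ∃ R : Set (Matrix (Fin m) (Fin n) D), ∃ R' : Set (Matrix (Fin m') (Fin n') D'),
      (IsTypeOne M → IsTypeOne R) ∧ (IsTypeTwo M → IsTypeTwo R) ∧
      R ∩ M = {A} ∧ IsMaximalSet R' ∧ φ '' R ⊆ R' ∧ R' ≠ M' ∧
      ((IsTypeOne R' ∧ IsTypeOne M') ∨ (IsTypeTwo R' ∧ IsTypeTwo M')) := by
  intro A hA
  by_contra hcon
  have hstuck : ∀ R ∈ transversals M A, ∀ W, IsMaximalSet W → φ '' R ⊆ W → SameType W M' →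
      W = M' := fun R hR W hW hRW hWM' =>
    by_contra fun hne => hcon ⟨R, W, hR.1, hR.2.1, hR.2.2, hW, hRW, hne, hWM'⟩
  have hA1 : mrank A ≤ 1 := by
    simpa using mrank_sub_le_one_of_pairwise (hMmax.pairwise_adjacent (by omega) (by omega)) hA h0M
  exact hnd <| degenerate_of_isStarCover (by omega) (by omega) hhom hA1
    (isStarCover_transversals (by omega) hn hMmax hA) hM'max hφM hstuck

/-- Lemma 3.7(a). -/
theorem nondegenerate_extension_same_type
    {D D' : Type} [DivisionRing D] [DivisionRing D'] {m n m' n' : ℕ}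
    (hm : 2 ≤ m) (hn : 2 ≤ n) (hm' : 2 ≤ m') (hn' : 2 ≤ n')
    (φ : Matrix (Fin m) (Fin n) D → Matrix (Fin m') (Fin n') D')
    (hhom : ∀ X Y, mrank (X - Y) = 1 → mrank (φ X - φ Y) = 1)
    (hnd : ¬ Degenerate φ) (h0 : φ 0 = 0)
    (M : Set (Matrix (Fin m) (Fin n) D)) (hMmax : IsMaximalSet M) (h0M : (0 : Matrix (Fin m) (Fin n) D) ∈ M)
    (M' : Set (Matrix (Fin m') (Fin n') D')) (hM'max : IsMaximalSet M')
    (hφM : φ '' M ⊆ M') :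
    ∀ A ∈ M, ∃ R : Set (Matrix (Fin m) (Fin n) D), ∃ R' : Set (Matrix (Fin m') (Fin n') D'),
      (IsTypeOne M → IsTypeOne R) ∧ (IsTypeTwo M → IsTypeTwo R) ∧
      R ∩ M = {A} ∧ IsMaximalSet R' ∧ φ '' R ⊆ R' ∧ R' ≠ M' ∧
      ((IsTypeOne R' ∧ IsTypeOne M') ∨ (IsTypeTwo R' ∧ IsTypeTwo M')) :=
  nondegenerate_extension_same_type_general hm hn hm' hn' φ hhom hnd M hMmax h0M M' hM'max hφM
end
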